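/- Let H ∈ (1/2,1) and K_H(t,s) = C_H (H - 1/2) s^{1/2-H} ∫_s^t (r-s)^{H-3/2} r^{H-1/2} dr for 0 < s < t. For any fixed t > 0 and ε' > 0 there exists C > 0 such that for all 0 < δ < min(1, t/3), ∫_δ^{t_δ} |K_H(t,s) - K_H(t,s_δ)|² ds ≤ C ( δ^{min(2H-1, 2-2H)} + 1_{H=3/4} δ^{1/2-ε'} ). -/

import Mathlib

/-!
Write `a = H - 1/2` and `F(s) = ∫_s^t (r-s)^(a-1) r^a dr`, so that `K_H(t,s) = c s^(-a) F(s)`.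
For `s ≥ δ` the grid point `p = s_δ` satisfies `s/2 ≤ p ≤ s < p + δ`, and
`K_H(t,s) - K_H(t,p) = c ((s^(-a) - p^(-a)) F(s) + p^(-a) (F(s) - F(p)))`.
The mean value theorem gives `|s^(-a) - p^(-a)| ≤ a (s-p) p^(-a-1) ≲ δ s^(-a-1)`,
while `0 ≤ F ≤ t^(2a)/a`.
Splitting `F(p)` at `s`, both the piece over `[p, s]` and the effect of moving the singularity
from `p` to `s` on `[s, t]` lie in `[0, t^a (s-p)^a / a]`, so `|F(s) - F(p)| ≤ t^a δ^a / a`.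
Hence `|K_H(t,s) - K_H(t,s_δ)|² ≲ δ² s^(-1-2H) + δ^(2H-1) s^(1-2H)`, whose integral over
`[δ, t]` is `≲ δ^(2-2H) + δ^(2H-1) ≤ 2 δ^min(2H-1, 2-2H)` for `δ < 1`.
-/

open intervalIntegral

/-- Normalizing constant of the fBm kernel. -/
noncomputable def C_H (H : ℝ) : ℝ :=
  Real.sqrt (2 * H * Real.Gamma (3 / 2 - H) / (Real.Gamma (H + 1 / 2) * Real.Gamma (2 - 2 * H)))

/-- The fBm Volterra kernel for `H ∈ (1/2,1)` and `0 < s < t`. -/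
noncomputable def K_H (H t s : ℝ) : ℝ :=
  C_H H * (H - 1 / 2) * s ^ (1 / 2 - H) *
    ∫ r in s..t, (r - s) ^ (H - 3 / 2) * r ^ (H - 1 / 2)

/-- Grid point: `gridPt δ s = kδ` for `s ∈ [kδ, (k+1)δ)`. -/
noncomputable def gridPt (δ s : ℝ) : ℝ := δ * ⌊s / δ⌋

open MeasureTheory Real Set

section GridPoint

variable {δ : ℝ}

lemma gridPt_le (hδ : 0 < δ) (s : ℝ) : gridPt δ s ≤ s :=
  calc δ * ⌊s / δ⌋ ≤ δ * (s / δ) := by gcongr; exact Int.floor_le _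
    _ = s := mul_div_cancel₀ s hδ.ne'

lemma lt_gridPt_add (hδ : 0 < δ) (s : ℝ) : s < gridPt δ s + δ :=
  calc s = δ * (s / δ) := (mul_div_cancel₀ s hδ.ne').symm
    _ < δ * (⌊s / δ⌋ + 1) := by gcongr; exact Int.lt_floor_add_one _
    _ = gridPt δ s + δ := by rw [gridPt]; ring

lemma le_gridPt (hδ : 0 < δ) {s : ℝ} (hs : δ ≤ s) : δ ≤ gridPt δ s := by
  have h : (1 : ℝ) ≤ ⌊s / δ⌋ := by
    exact_mod_cast Int.le_floor.2 (by simpa using (one_le_div hδ).2 hs)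
  exact le_mul_of_one_le_right hδ.le h

end GridPoint

noncomputable def kernelIntegral (a b t s : ℝ) : ℝ :=
  ∫ r in s..t, (r - s) ^ (a - 1) * r ^ b

lemma K_H_eq_kernelIntegral (H t s : ℝ) :
    K_H H t s =
      C_H H * (H - 1 / 2) * s ^ (1 / 2 - H) * kernelIntegral (H - 1 / 2) (H - 1 / 2) t s := by
  rw [K_H, kernelIntegral, show H - 1 / 2 - 1 = H - 3 / 2 by ring]

section KernelIntegral

variable {a b p s t : ℝ}

lemma intervalIntegrable_sub_rpow (ha : 0 < a) (p x y : ℝ) :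
    IntervalIntegrable (fun r => (r - p) ^ (a - 1)) volume x y := by
  simpa using (intervalIntegrable_rpow' (a := x - p) (b := y - p)
    (by linarith : -1 < a - 1)).comp_sub_right p

lemma intervalIntegrable_sub_rpow_mul_rpow (ha : 0 < a) (hb : 0 ≤ b) (p x y : ℝ) :
    IntervalIntegrable (fun r => (r - p) ^ (a - 1) * r ^ b) volume x y :=
  (intervalIntegrable_sub_rpow ha p x y).mul_continuousOn (continuous_rpow_const hb).continuousOn

lemma integral_sub_rpow (ha : 0 < a) (p x y : ℝ) :
    ∫ r in x..y, (r - p) ^ (a - 1) = ((y - p) ^ a - (x - p) ^ a) / a := by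
  rw [integral_comp_sub_right (fun u => u ^ (a - 1)), integral_rpow (Or.inl (by linarith)),
    sub_add_cancel]

lemma integral_sub_rpow_mul_rpow_nonneg {x y : ℝ} (hp : 0 ≤ p) (hpx : p ≤ x) (hxy : x ≤ y) :
    0 ≤ ∫ r in x..y, (r - p) ^ (a - 1) * r ^ b :=
  integral_nonneg hxy fun r hr =>
    mul_nonneg (rpow_nonneg (by linarith [hr.1]) _) (rpow_nonneg (by linarith [hr.1]) _)

lemma integral_sub_rpow_mul_rpow_le {x y : ℝ} (ha : 0 < a) (hb : 0 ≤ b) (hp : 0 ≤ p)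
    (hpx : p ≤ x) (hxy : x ≤ y) (hyt : y ≤ t) :
    ∫ r in x..y, (r - p) ^ (a - 1) * r ^ b ≤ t ^ b * (((y - p) ^ a - (x - p) ^ a) / a) := by
  rw [← integral_sub_rpow ha, ← intervalIntegral.integral_const_mul]
  refine integral_mono_on hxy (intervalIntegrable_sub_rpow_mul_rpow ha hb p x y)
    ((intervalIntegrable_sub_rpow ha p x y).const_mul _) fun r hr => ?_
  rw [mul_comm]
  exact mul_le_mul_of_nonneg_right (rpow_le_rpow (by linarith [hr.1]) (hr.2.trans hyt) hb)
    (rpow_nonneg (by linarith [hr.1]) _)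

lemma kernelIntegral_nonneg (hs : 0 ≤ s) (hst : s ≤ t) : 0 ≤ kernelIntegral a b t s :=
  integral_sub_rpow_mul_rpow_nonneg hs le_rfl hst

lemma kernelIntegral_le (ha : 0 < a) (hb : 0 ≤ b) (hs : 0 ≤ s) (hst : s ≤ t) :
    kernelIntegral a b t s ≤ t ^ b * (t ^ a / a) := by
  refine (integral_sub_rpow_mul_rpow_le ha hb hs le_rfl hst le_rfl).trans ?_
  rw [sub_self, zero_rpow ha.ne', sub_zero]
  exact mul_le_mul_of_nonneg_left (by gcongr; linarith) (rpow_nonneg (hs.trans hst) _)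

lemma kernelIntegral_sub_integral_mem_Icc (ha : 0 < a) (ha1 : a ≤ 1) (hb : 0 ≤ b)
    (hp : 0 ≤ p) (hps : p ≤ s) (hst : s ≤ t) :
    kernelIntegral a b t s - ∫ r in s..t, (r - p) ^ (a - 1) * r ^ b ∈
      Icc 0 (t ^ b * ((s - p) ^ a / a)) := by
  have hdiff : kernelIntegral a b t s - ∫ r in s..t, (r - p) ^ (a - 1) * r ^ b =
      ∫ r in s..t, ((r - s) ^ (a - 1) - (r - p) ^ (a - 1)) * r ^ b := by
    simp only [kernelIntegral, sub_mul]
    exact (integral_sub (intervalIntegrable_sub_rpow_mul_rpow ha hb s s t)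
      (intervalIntegrable_sub_rpow_mul_rpow ha hb p s t)).symm
  have hdecr : ∀ r ∈ Ioo s t, (r - p) ^ (a - 1) ≤ (r - s) ^ (a - 1) := fun r hr =>
    rpow_le_rpow_of_nonpos (by linarith [hr.1]) (by linarith) (by linarith)
  have hint : IntervalIntegrable (fun r => ((r - s) ^ (a - 1) - (r - p) ^ (a - 1)) * r ^ b)
      volume s t := by
    simpa only [sub_mul] using (intervalIntegrable_sub_rpow_mul_rpow ha hb s s t).sub
      (intervalIntegrable_sub_rpow_mul_rpow ha hb p s t)
  rw [hdiff]
  constructor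
  · rw [← intervalIntegral.integral_zero]
    exact integral_mono_on_of_le_Ioo hst intervalIntegrable_const hint fun r hr =>
      mul_nonneg (sub_nonneg.2 (hdecr r hr)) (rpow_nonneg (by linarith [hr.1]) _)
  · calc _ ≤ ∫ r in s..t, t ^ b * ((r - s) ^ (a - 1) - (r - p) ^ (a - 1)) :=
          integral_mono_on_of_le_Ioo hst hint (((intervalIntegrable_sub_rpow ha s s t).sub
            (intervalIntegrable_sub_rpow ha p s t)).const_mul _) fun r hr => by
            rw [mul_comm]
            exact mul_le_mul_of_nonneg_right (rpow_le_rpow (by linarith [hr.1]) hr.2.le hb)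
              (sub_nonneg.2 (hdecr r hr))
      _ = t ^ b * (((t - s) ^ a - (t - p) ^ a + (s - p) ^ a) / a) := by
          rw [intervalIntegral.integral_const_mul, integral_sub
            (intervalIntegrable_sub_rpow ha s s t) (intervalIntegrable_sub_rpow ha p s t),
            integral_sub_rpow ha, integral_sub_rpow ha, sub_self, zero_rpow ha.ne']
          ring
      _ ≤ t ^ b * ((s - p) ^ a / a) := by
          refine mul_le_mul_of_nonneg_left ?_ (rpow_nonneg (by linarith) _)
          gcongr
          linarith [rpow_le_rpow (by linarith) (by linarith : t - s ≤ t - p) ha.le]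

lemma abs_kernelIntegral_sub_le (ha : 0 < a) (ha1 : a ≤ 1) (hb : 0 ≤ b)
    (hp : 0 ≤ p) (hps : p ≤ s) (hst : s ≤ t) :
    |kernelIntegral a b t s - kernelIntegral a b t p| ≤ t ^ b * ((s - p) ^ a / a) := by
  have hsplit : kernelIntegral a b t p = (∫ r in p..s, (r - p) ^ (a - 1) * r ^ b) +
      ∫ r in s..t, (r - p) ^ (a - 1) * r ^ b :=
    (integral_add_adjacent_intervals (intervalIntegrable_sub_rpow_mul_rpow ha hb p p s)
      (intervalIntegrable_sub_rpow_mul_rpow ha hb p s t)).symm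
  have hhead := integral_sub_rpow_mul_rpow_le ha hb hp le_rfl hps hst
  rw [sub_self, zero_rpow ha.ne', sub_zero] at hhead
  obtain ⟨htail₀, htail₁⟩ := kernelIntegral_sub_integral_mem_Icc ha ha1 hb hp hps hst
  rw [hsplit, sub_add_eq_sub_sub_swap]
  exact abs_sub_le_of_nonneg_of_le htail₀ htail₁
    (integral_sub_rpow_mul_rpow_nonneg hp le_rfl hps) hhead

end KernelIntegral

section RpowBounds

variable {c p s : ℝ}

lemma rpow_sub_rpow_le_of_neg (hc : c < 0) (hp : 0 < p) (hps : p ≤ s) :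
    p ^ c - s ^ c ≤ -c * (s - p) * p ^ (c - 1) := by
  have h0 : (0 : ℝ) ∉ uIcc p s := notMem_uIcc_of_lt hp (hp.trans_le hps)
  have hint : ∫ x in p..s, x ^ (c - 1) = (s ^ c - p ^ c) / c := by
    rw [integral_rpow (Or.inr ⟨by linarith, h0⟩), sub_add_cancel]
  have hle : ∫ x in p..s, x ^ (c - 1) ≤ ∫ _ in p..s, p ^ (c - 1) :=
    integral_mono_on hps (intervalIntegrable_rpow (Or.inr h0)) intervalIntegrable_const
      fun x hx => rpow_le_rpow_of_nonpos hp hx.1 (by linarith)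
  rw [hint, intervalIntegral.integral_const, smul_eq_mul] at hle
  calc p ^ c - s ^ c = -c * ((s ^ c - p ^ c) / c) := by field_simp [hc.ne]; ring
    _ ≤ -c * ((s - p) * p ^ (c - 1)) := mul_le_mul_of_nonneg_left hle (by linarith)
    _ = -c * (s - p) * p ^ (c - 1) := by ring

lemma rpow_le_two_rpow_neg_mul_rpow (hc : c ≤ 0) (hs : 0 < s) (hsp : s ≤ 2 * p) :
    p ^ c ≤ 2 ^ (-c) * s ^ c :=
  calc p ^ c ≤ (s / 2) ^ c := rpow_le_rpow_of_nonpos (by positivity) (by linarith) hc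
    _ = 2 ^ (-c) * s ^ c := by rw [div_rpow hs.le zero_le_two, rpow_neg zero_le_two]; ring

lemma abs_rpow_sub_rpow_le_of_neg (hc : c < 0) (hp : 0 < p) (hps : p ≤ s) (hsp : s ≤ 2 * p) :
    |s ^ c - p ^ c| ≤ -c * (s - p) * (2 ^ (1 - c) * s ^ (c - 1)) := by
  rw [abs_sub_comm, abs_of_nonneg (sub_nonneg.2 (rpow_le_rpow_of_nonpos hp hps hc.le))]
  refine (rpow_sub_rpow_le_of_neg hc hp hps).trans ?_
  have hmove := rpow_le_two_rpow_neg_mul_rpow (c := c - 1) (by linarith) (hp.trans_le hps) hsp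
  rw [neg_sub] at hmove
  exact mul_le_mul_of_nonneg_left hmove (mul_nonneg (by linarith) (by linarith))

end RpowBounds

lemma exists_abs_K_H_sub_K_H_gridPt_le {H t : ℝ} (hH0 : 1 / 2 < H) (hH : H < 1) (ht : 0 ≤ t) :
    ∃ A B : ℝ, 0 ≤ A ∧ 0 ≤ B ∧ ∀ δ s : ℝ, 0 < δ → δ ≤ s → s ≤ t →
      |K_H H t s - K_H H t (gridPt δ s)| ≤
        A * δ * s ^ (1 / 2 - H - 1) + B * δ ^ (H - 1 / 2) * s ^ (1 / 2 - H) := by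
  have ha : 0 < H - 1 / 2 := by linarith
  have hc : 0 ≤ C_H H * (H - 1 / 2) := mul_nonneg (sqrt_nonneg _) ha.le
  have hT : 0 ≤ t ^ (H - 1 / 2) / (H - 1 / 2) := div_nonneg (rpow_nonneg ht _) ha.le
  refine ⟨C_H H * (H - 1 / 2) * ((H - 1 / 2) * 2 ^ (1 - (1 / 2 - H)) *
      (t ^ (H - 1 / 2) * (t ^ (H - 1 / 2) / (H - 1 / 2)))),
    C_H H * (H - 1 / 2) * (2 ^ (H - 1 / 2) * (t ^ (H - 1 / 2) / (H - 1 / 2))),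
    by positivity, by positivity, fun δ s hδ hs hst => ?_⟩
  set p := gridPt δ s
  have hps : p ≤ s := gridPt_le hδ s
  have hsp : s < p + δ := lt_gridPt_add hδ s
  have hp : 0 < p := hδ.trans_le (le_gridPt hδ hs)
  have hs0 : 0 < s := hδ.trans_le hs
  have hs2p : s ≤ 2 * p := by linarith [le_gridPt hδ hs]
  set F := kernelIntegral (H - 1 / 2) (H - 1 / 2) t
  have hdecomp : K_H H t s - K_H H t p = C_H H * (H - 1 / 2) *
      ((s ^ (1 / 2 - H) - p ^ (1 / 2 - H)) * F s + p ^ (1 / 2 - H) * (F s - F p)) := by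
    simp only [K_H_eq_kernelIntegral, F]; ring
  have hpow : |s ^ (1 / 2 - H) - p ^ (1 / 2 - H)| ≤
      (H - 1 / 2) * δ * (2 ^ (1 - (1 / 2 - H)) * s ^ (1 / 2 - H - 1)) := by
    refine (abs_rpow_sub_rpow_le_of_neg (by linarith) hp hps hs2p).trans ?_
    rw [neg_sub]
    gcongr
    linarith
  have hp_pow : p ^ (1 / 2 - H) ≤ 2 ^ (H - 1 / 2) * s ^ (1 / 2 - H) := by
    simpa only [neg_sub] using
      rpow_le_two_rpow_neg_mul_rpow (c := 1 / 2 - H) (by linarith) hs0 hs2p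
  have hF0 : 0 ≤ F s := kernelIntegral_nonneg hs0.le hst
  have hF : F s ≤ t ^ (H - 1 / 2) * (t ^ (H - 1 / 2) / (H - 1 / 2)) :=
    kernelIntegral_le ha ha.le hs0.le hst
  have hdF : |F s - F p| ≤ t ^ (H - 1 / 2) * (δ ^ (H - 1 / 2) / (H - 1 / 2)) := by
    refine (abs_kernelIntegral_sub_le ha (by linarith) ha.le hp.le hps hst).trans ?_
    gcongr
    linarith
  calc |K_H H t s - K_H H t p|
      ≤ C_H H * (H - 1 / 2) * (|s ^ (1 / 2 - H) - p ^ (1 / 2 - H)| * F s +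
          p ^ (1 / 2 - H) * |F s - F p|) := by
        rw [hdecomp, abs_mul, abs_of_nonneg hc]
        gcongr
        refine (abs_add_le _ _).trans_eq ?_
        rw [abs_mul, abs_mul, abs_of_nonneg hF0, abs_of_nonneg (rpow_nonneg hp.le _)]
    _ ≤ C_H H * (H - 1 / 2) *
          ((H - 1 / 2) * δ * (2 ^ (1 - (1 / 2 - H)) * s ^ (1 / 2 - H - 1)) *
            (t ^ (H - 1 / 2) * (t ^ (H - 1 / 2) / (H - 1 / 2))) +
          2 ^ (H - 1 / 2) * s ^ (1 / 2 - H) *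
            (t ^ (H - 1 / 2) * (δ ^ (H - 1 / 2) / (H - 1 / 2)))) := by
        gcongr
    _ = _ := by ring

lemma exists_sq_K_H_sub_K_H_gridPt_le {H t : ℝ} (hH0 : 1 / 2 < H) (hH : H < 1) (ht : 0 ≤ t) :
    ∃ A B : ℝ, 0 ≤ A ∧ 0 ≤ B ∧ ∀ δ s : ℝ, 0 < δ → δ ≤ s → s ≤ t →
      |K_H H t s - K_H H t (gridPt δ s)| ^ 2 ≤
        A * δ ^ 2 * s ^ (-1 - 2 * H) + B * δ ^ (2 * H - 1) * s ^ (1 - 2 * H) := by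
  obtain ⟨A, B, hA, hB, hK⟩ := exists_abs_K_H_sub_K_H_gridPt_le hH0 hH ht
  refine ⟨2 * A ^ 2, 2 * B ^ 2, by positivity, by positivity, fun δ s hδ hs hst => ?_⟩
  have hsq : ∀ {x : ℝ}, 0 < x → ∀ y z : ℝ, 2 * y = z → (x ^ y) ^ 2 = x ^ z := by
    rintro x hx y z rfl
    rw [← rpow_natCast, ← rpow_mul hx.le, Nat.cast_ofNat, mul_comm]
  have hs0 : 0 < s := hδ.trans_le hs
  calc |K_H H t s - K_H H t (gridPt δ s)| ^ 2
      ≤ (A * δ * s ^ (1 / 2 - H - 1) + B * δ ^ (H - 1 / 2) * s ^ (1 / 2 - H)) ^ 2 :=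
        pow_le_pow_left₀ (abs_nonneg _) (hK δ s hδ hs hst) 2
    _ ≤ 2 * ((A * δ * s ^ (1 / 2 - H - 1)) ^ 2 +
          (B * δ ^ (H - 1 / 2) * s ^ (1 / 2 - H)) ^ 2) := add_sq_le
    _ = _ := by
        simp only [mul_pow, hsq hs0 (1 / 2 - H - 1) (-1 - 2 * H) (by ring),
          hsq hs0 (1 / 2 - H) (1 - 2 * H) (by ring), hsq hδ (H - 1 / 2) (2 * H - 1) (by ring)]
        ring

section RpowIntegrals

variable {c x y : ℝ}

lemma integral_rpow_le_of_lt_neg_one (hc : c < -1) (hx : 0 < x) (hxy : x ≤ y) :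
    ∫ s in x..y, s ^ c ≤ x ^ (c + 1) / -(c + 1) := by
  rw [integral_rpow (Or.inr ⟨hc.ne, notMem_uIcc_of_lt hx (hx.trans_le hxy)⟩),
    ← neg_div_neg_eq, neg_sub]
  exact div_le_div_of_nonneg_right (sub_le_self _ (rpow_nonneg (hx.le.trans hxy) _))
    (by linarith)

lemma integral_rpow_le_of_neg_one_lt (hc : -1 < c) (hx : 0 ≤ x) :
    ∫ s in x..y, s ^ c ≤ y ^ (c + 1) / (c + 1) := by
  rw [integral_rpow (Or.inl hc)]
  exact div_le_div_of_nonneg_right (sub_le_self _ (rpow_nonneg hx _)) (by linarith)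

end RpowIntegrals

lemma integral_le_of_le_rpow_majorant {H A B δ T : ℝ} {f : ℝ → ℝ} (hH0 : 0 < H)
    (hH : H < 1) (hA : 0 ≤ A) (hB : 0 ≤ B) (hδ : 0 < δ) (hδT : δ ≤ T)
    (hf₀ : ∀ s ∈ Icc δ T, 0 ≤ f s)
    (hf : ∀ s ∈ Icc δ T,
      f s ≤ A * δ ^ 2 * s ^ (-1 - 2 * H) + B * δ ^ (2 * H - 1) * s ^ (1 - 2 * H)) :
    ∫ s in δ..T, f s ≤
      A / (2 * H) * δ ^ (2 - 2 * H) + B * T ^ (2 - 2 * H) / (2 - 2 * H) * δ ^ (2 * H - 1) := by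
  have h0 : (0 : ℝ) ∉ uIcc δ T := notMem_uIcc_of_lt hδ (hδ.trans_le hδT)
  have hi₁ := (intervalIntegrable_rpow (μ := volume) (r := -1 - 2 * H) (Or.inr h0)).const_mul
    (A * δ ^ 2)
  have hi₂ := (intervalIntegrable_rpow (μ := volume) (r := 1 - 2 * H) (Or.inr h0)).const_mul
    (B * δ ^ (2 * H - 1))
  have hδ₂ : δ ^ 2 * δ ^ (-1 - 2 * H + 1) = δ ^ (2 - 2 * H) := by
    rw [← rpow_natCast, ← rpow_add hδ]
    congr 1
    push_cast
    ring
  calc ∫ s in δ..T, f s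
      ≤ ∫ s in δ..T,
          (A * δ ^ 2 * s ^ (-1 - 2 * H) + B * δ ^ (2 * H - 1) * s ^ (1 - 2 * H)) := by
        rw [integral_of_le hδT, integral_of_le hδT]
        refine integral_mono_of_nonneg ?_ (hi₁.add hi₂).1 ?_ <;>
          filter_upwards [ae_restrict_mem measurableSet_Ioc] with s hs
        exacts [hf₀ s (Ioc_subset_Icc_self hs), hf s (Ioc_subset_Icc_self hs)]
    _ ≤ A * δ ^ 2 * (δ ^ (-1 - 2 * H + 1) / -(-1 - 2 * H + 1)) +
          B * δ ^ (2 * H - 1) * (T ^ (1 - 2 * H + 1) / (1 - 2 * H + 1)) := by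
        rw [integral_add hi₁ hi₂, intervalIntegral.integral_const_mul,
          intervalIntegral.integral_const_mul]
        gcongr
        · exact integral_rpow_le_of_lt_neg_one (by linarith) hδ hδT
        · exact integral_rpow_le_of_neg_one_lt (by linarith) hδ.le
    _ = _ := by
        rw [mul_assoc A, ← mul_div_assoc, hδ₂, show 1 - 2 * H + 1 = 2 - 2 * H by ring,
          show -(-1 - 2 * H + 1) = 2 * H by ring]
        ring

theorem stmt_13_general (H : ℝ) (hH0 : 1 / 2 < H) (hH : H < 1) (t : ℝ) (ht : 0 < t)
    (ε' : ℝ) :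
    ∃ C > 0, ∀ δ : ℝ, 0 < δ → δ < min 1 (t / 3) →
      (∫ s in δ..gridPt δ t, |K_H H t s - K_H H t (gridPt δ s)| ^ 2) ≤
        C * (δ ^ min (2 * H - 1) (2 - 2 * H) +
          (if H = 3 / 4 then 1 else 0) * δ ^ (1 / 2 - ε')) := by
  obtain ⟨A, B, hA, hB, hK⟩ := exists_sq_K_H_sub_K_H_gridPt_le hH0 hH ht.le
  have hB' : 0 ≤ B * t ^ (2 - 2 * H) / (2 - 2 * H) :=
    div_nonneg (mul_nonneg hB (rpow_nonneg ht.le _)) (by linarith)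
  refine ⟨A / (2 * H) + B * t ^ (2 - 2 * H) / (2 - 2 * H) + 1, by positivity,
    fun δ hδ hδlt => ?_⟩
  have hδ1 : δ < 1 := hδlt.trans_le (min_le_left _ _)
  have hδT : δ ≤ gridPt δ t :=
    le_gridPt hδ (by linarith [hδlt.trans_le (min_le_right 1 (t / 3))])
  have hTt : gridPt δ t ≤ t := gridPt_le hδ t
  have hm₁ : δ ^ (2 - 2 * H) ≤ δ ^ min (2 * H - 1) (2 - 2 * H) :=
    rpow_le_rpow_of_exponent_ge hδ hδ1.le (min_le_right _ _)
  have hm₂ : δ ^ (2 * H - 1) ≤ δ ^ min (2 * H - 1) (2 - 2 * H) :=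
    rpow_le_rpow_of_exponent_ge hδ hδ1.le (min_le_left _ _)
  have hind : 0 ≤ (if H = 3 / 4 then (1 : ℝ) else 0) * δ ^ (1 / 2 - ε') :=
    mul_nonneg (by split_ifs <;> norm_num) (rpow_nonneg hδ.le _)
  calc _ ≤ A / (2 * H) * δ ^ (2 - 2 * H) +
          B * (gridPt δ t) ^ (2 - 2 * H) / (2 - 2 * H) * δ ^ (2 * H - 1) :=
        integral_le_of_le_rpow_majorant (by linarith) hH hA hB hδ hδT (fun _ _ => sq_nonneg _)
          fun s hs => hK δ s hδ hs.1 (hs.2.trans hTt)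
    _ ≤ A / (2 * H) * δ ^ min (2 * H - 1) (2 - 2 * H) +
          B * t ^ (2 - 2 * H) / (2 - 2 * H) * δ ^ min (2 * H - 1) (2 - 2 * H) := by
        have hT : gridPt δ t ^ (2 - 2 * H) ≤ t ^ (2 - 2 * H) :=
          rpow_le_rpow (by linarith) hTt (by linarith)
        gcongr
        linarith
    _ ≤ (A / (2 * H) + B * t ^ (2 - 2 * H) / (2 - 2 * H) + 1) *
          δ ^ min (2 * H - 1) (2 - 2 * H) := by
        have := rpow_nonneg hδ.le (min (2 * H - 1) (2 - 2 * H))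
        linarith
    _ ≤ _ := by gcongr; exact le_add_of_nonneg_right hind

/-- For `H ∈ (1/2,1)`, fixed `t > 0` and any `ε' > 0`, there is `C > 0` such that for
all `0 < δ < min(1, t/3)`,
`∫_δ^{t_δ} |K_H(t,s) - K_H(t,s_δ)|² ds ≤ C (δ^{min(2H-1, 2-2H)} + 1_{H=3/4} δ^{1/2-ε'})`. -/
theorem stmt_13 (H : ℝ) (hH0 : 1 / 2 < H) (hH : H < 1) (t : ℝ) (ht : 0 < t)
    (ε' : ℝ) (hε' : 0 < ε') :
    ∃ C > 0, ∀ δ : ℝ, 0 < δ → δ < min 1 (t / 3) →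
      (∫ s in δ..gridPt δ t, |K_H H t s - K_H H t (gridPt δ s)| ^ 2) ≤
        C * (δ ^ min (2 * H - 1) (2 - 2 * H) +
          (if H = 3 / 4 then 1 else 0) * δ ^ (1 / 2 - ε')) :=
  stmt_13_general H hH0 hH t ht ε'
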